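/- Let F be a finite field and consider a single-sender instance on [m] partitioned into S_1 = {1,…,m_1} and S_2 = {m_1+1,…,m} such that no receiver has cross side information: K_i ⊆ S_1 for all i ∈ S_1 and K_i ⊆ S_2 for all i ∈ S_2 (the side-information digraph splits into the two vertex-disjoint sub-digraphs with no edges between them). Let A = A_1 ∪ A_2 with A_j ⊊ S_j, and let l*_j be the minimal length of a valid weakly secure linear index code over F for the sub-instance on S_j (side-information K_i, eavesdropper A_j), assumed to exist for j = 1,2. Then the minimal length l* of a valid weakly secure linear index code over F for the full instance equals l*_1 + l*_2, and the block-diagonal concatenation of optimal codes for the two sub-instances achieves it. -/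

import Mathlib

open Matrix Sum

noncomputable section

variable (F : Type*) [Field F] [Fintype F]

/-- The row space of a matrix: the span of its rows. -/
def rowSpace {ρ ι : Type*} (G : Matrix ρ ι F) : Submodule F (ι → F) :=
  Submodule.span F (Set.range fun r j => G r j)

/-- Weak security of the linear code `x ↦ G x` against an eavesdropper knowing `x j` for
`j ∈ A`. -/
def WeaklySecure {ρ ι : Type*} [DecidableEq ι] (G : Matrix ρ ι F) (A : Set ι) : Prop :=
  ∀ i ∉ A, ∀ u : ι → F, (∀ j, u j ≠ 0 → j ∈ A) →
    u + Pi.single i (1 : F) ∉ rowSpace F G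

/-- `G` is a valid index code for side-information sets `K`. -/
def ValidCode {ρ ι : Type*} [Fintype ι] (K : ι → Set ι) (G : Matrix ρ ι F) : Prop :=
  ∀ i : ι, ∃ D : (ρ → F) → (↥(K i) → F) → F,
    ∀ x : ι → F, D (G.mulVec x) (fun j => x j.1) = x i

/-- Achievable lengths of valid weakly secure (single-sender) linear index codes. -/
def oneLens {ι : Type*} [Fintype ι] [DecidableEq ι] (K : ι → Set ι) (A : Set ι) :
    Set ℕ :=
  {l | ∃ G : Matrix (Fin l) ι F, ValidCode F K G ∧ WeaklySecure F G A}

/-!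
Validity and weak security of a linear code depend only on its row space `W`: `G` is valid iff
`eᵢ ∈ W + span {eⱼ | j ∈ Kᵢ}` for every receiver `i` (a linear functional separating `eᵢ` from
this space would give two messages that receiver cannot tell apart), and weakly secure against
`A` iff `eᵢ ∉ W + span {eⱼ | j ∈ A}` for every `i ∉ A`.

The block-diagonal code has row space `W₁ ⊕ W₂`, which inherits both properties from its
summands, so `l* ≤ l*₁ + l*₂`. Conversely, let `W` be the row space of an optimal code and `Wⱼ`
the subspace of its vectors supported on `Sⱼ`, so `dim W₁ + dim W₂ ≤ dim W`. Since no receiver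
in `Sⱼ` has side information outside `Sⱼ`, in a decomposition `eᵢ = w + s` with `w ∈ W` the
vector `w` is supported on `Sⱼ`; hence `Wⱼ` is a valid code for the sub-instance, and it is
secure because it is contained in `W`.
-/

section

variable {F}
omit [Fintype F]

open Module

local notation "extZ" => Function.ExtendByZero.linearMap F
local notation "res" => LinearMap.funLeft F F

section Coordinates

variable {ι : Type*}

-- `span {eⱼ | j ∈ S}`, described as the vectors vanishing off `S`
def supportedOn (S : Set ι) : Submodule F (ι → F) :=
  Submodule.pi Sᶜ fun _ => ⊥

theorem mem_supportedOn {S : Set ι} {v : ι → F} : v ∈ supportedOn S ↔ ∀ j ∉ S, v j = 0 := by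
  simp [supportedOn, Submodule.mem_pi]

theorem supportedOn_mono {S T : Set ι} (h : S ⊆ T) : supportedOn (F := F) S ≤ supportedOn T :=
  fun _ hv => mem_supportedOn.2 fun j hj => mem_supportedOn.1 hv j fun hjS => hj (h hjS)

theorem single_mem_supportedOn [DecidableEq ι] {S : Set ι} {j : ι} (hj : j ∈ S) :
    Pi.single j (1 : F) ∈ supportedOn S :=
  mem_supportedOn.2 fun _ hk => Pi.single_eq_of_ne (ne_of_mem_of_not_mem hj hk).symm _

variable [Fintype ι] [DecidableEq ι]

theorem supportedOn_le_ker_dotProduct_iff (S : Set ι) (x : ι → F) :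
    supportedOn S ≤ LinearMap.ker (dotProductEquiv F ι x) ↔ ∀ j ∈ S, x j = 0 := by
  refine ⟨fun h j hj => ?_, fun h v hv => ?_⟩
  · simpa using h (single_mem_supportedOn hj)
  · refine Finset.sum_eq_zero fun j _ => ?_
    by_cases hj : j ∈ S
    · simp [h j hj]
    · simp [mem_supportedOn.1 hv j hj]

theorem rowSpace_le_ker_dotProduct_iff {ρ : Type*} (G : Matrix ρ ι F) (x : ι → F) :
    rowSpace F G ≤ LinearMap.ker (dotProductEquiv F ι x) ↔ G *ᵥ x = 0 := by
  simp [rowSpace, Submodule.span_le, Set.range_subset_iff, funext_iff, mulVec, dotProduct_comm x]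

theorem mem_iff_forall_le_ker_dotProduct (V : Submodule F (ι → F)) (u : ι → F) :
    u ∈ V ↔ ∀ x : ι → F, V ≤ LinearMap.ker (dotProductEquiv F ι x) → x ⬝ᵥ u = 0 := by
  conv_lhs => rw [← Subspace.dualAnnihilator_dualCoannihilator_eq (W := V)]
  rw [Submodule.mem_dualCoannihilator, (dotProductEquiv F ι).surjective.forall]
  simp [Submodule.mem_dualAnnihilator, SetLike.le_def]

end Coordinates

section Codes

variable {ι ρ : Type*}

theorem validCode_iff_forall_mulVec_eq_zero [Fintype ι] (K : ι → Set ι) (G : Matrix ρ ι F) :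
    ValidCode F K G ↔ ∀ i x, G *ᵥ x = 0 → (∀ j ∈ K i, x j = 0) → x i = 0 := by
  constructor
  · intro hG i x hx hxK
    obtain ⟨D, hD⟩ := hG i
    have hxK' : (fun j : K i => x j) = fun j : K i => (0 : ι → F) j :=
      funext fun j => hxK j j.2
    rw [← hD x, hx, hxK', ← mulVec_zero G, hD 0, Pi.zero_apply]
  · intro hG i
    classical
    -- decode by any message consistent with what receiver `i` sees: it differs from the true
    -- message by a kernel vector vanishing on `K i`
    refine ⟨fun y t => if h : ∃ x, G *ᵥ x = y ∧ ∀ j : K i, x j = t j then h.choose i else 0,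
      fun x => ?_⟩
    have hx : ∃ x', G *ᵥ x' = G *ᵥ x ∧ ∀ j : K i, x' j = x j := ⟨x, rfl, fun _ => rfl⟩
    obtain ⟨hmul, hK⟩ := hx.choose_spec
    dsimp only
    rw [dif_pos hx, ← sub_eq_zero]
    exact hG i (hx.choose - x) (by rw [mulVec_sub, hmul, sub_self])
      fun j hj => sub_eq_zero.2 (hK ⟨j, hj⟩)

theorem exists_rowSpace_eq [Fintype ι] (V : Submodule F (ι → F)) :
    ∃ G : Matrix (Fin (finrank F V)) ι F, rowSpace F G = V := by
  let b := finBasis F V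
  refine ⟨fun r => b r, ?_⟩
  change Submodule.span F (Set.range (V.subtype ∘ b)) = V
  rw [Set.range_comp, ← Submodule.map_span, b.span_eq, Submodule.map_subtype_top]

theorem finrank_rowSpace_le [Fintype ρ] (G : Matrix ρ ι F) :
    finrank F (rowSpace F G) ≤ Fintype.card ρ :=
  finrank_range_le_card _

variable [DecidableEq ι]

def IsDecodable (K : ι → Set ι) (W : Submodule F (ι → F)) : Prop :=
  ∀ i, Pi.single i 1 ∈ W ⊔ supportedOn (K i)

def IsSecure (A : Set ι) (W : Submodule F (ι → F)) : Prop :=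
  ∀ i ∉ A, Pi.single i 1 ∉ W ⊔ supportedOn A

theorem validCode_iff_isDecodable [Fintype ι] (K : ι → Set ι) (G : Matrix ρ ι F) :
    ValidCode F K G ↔ IsDecodable K (rowSpace F G) := by
  rw [validCode_iff_forall_mulVec_eq_zero]
  refine forall_congr' fun i => ?_
  simp only [mem_iff_forall_le_ker_dotProduct _ (Pi.single i (1 : F)), sup_le_iff,
    rowSpace_le_ker_dotProduct_iff, supportedOn_le_ker_dotProduct_iff, dotProduct_single, mul_one]
  exact forall_congr' fun x => and_imp.symm

theorem weaklySecure_iff_isSecure (G : Matrix ρ ι F) (A : Set ι) :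
    WeaklySecure F G A ↔ IsSecure A (rowSpace F G) := by
  refine forall₂_congr fun i _ => ?_
  simp only [Submodule.mem_sup, mem_supportedOn, not_exists, not_and]
  constructor
  · intro h w hw a ha hwa
    refine h (-a) (fun j hj => ?_) ?_
    · by_contra hjA
      exact hj (by simp [ha j hjA])
    · convert hw using 1
      rw [← hwa]
      abel
  · intro h u hu hmem
    refine h _ hmem (-u) (fun j hj => ?_) (by abel)
    by_contra huj
    exact hj (hu j (by simpa using huj))

theorem finrank_mem_oneLens [Fintype F] [Fintype ι] {K : ι → Set ι} {A : Set ι}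
    {W : Submodule F (ι → F)} (hK : IsDecodable K W) (hA : IsSecure A W) :
    finrank F W ∈ oneLens F K A := by
  obtain ⟨G, hG⟩ := exists_rowSpace_eq W
  refine ⟨G, ?_, ?_⟩
  · rwa [validCode_iff_isDecodable, hG]
  · rwa [weaklySecure_iff_isSecure, hG]

end Codes

section Transfer

variable {κ ι : Type*} {f : κ → ι}

theorem funLeft_mem_supportedOn {S : Set ι} {v : ι → F} (hv : v ∈ supportedOn S) :
    res f v ∈ supportedOn (f ⁻¹' S) :=
  mem_supportedOn.2 fun k hk => mem_supportedOn.1 hv (f k) hk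

theorem extendByZero_mem_supportedOn (hf : f.Injective) {S : Set ι} {v : κ → F}
    (hv : v ∈ supportedOn (f ⁻¹' S)) : extZ f v ∈ supportedOn S := by
  refine mem_supportedOn.2 fun j hj => ?_
  by_cases hjf : ∃ k, f k = j
  · obtain ⟨k, rfl⟩ := hjf
    rw [Function.ExtendByZero.linearMap_apply, hf.extend_apply]
    exact mem_supportedOn.1 hv k hj
  · rw [Function.ExtendByZero.linearMap_apply, Function.extend_apply' _ _ _ hjf, Pi.zero_apply]

theorem extendByZero_funLeft (hf : f.Injective) {v : ι → F}
    (hv : v ∈ supportedOn (Set.range f)) : extZ f (res f v) = v := by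
  funext j
  by_cases hjf : ∃ k, f k = j
  · obtain ⟨k, rfl⟩ := hjf
    rw [Function.ExtendByZero.linearMap_apply, hf.extend_apply, LinearMap.funLeft_apply]
  · rw [Function.ExtendByZero.linearMap_apply, Function.extend_apply' _ _ _ hjf, Pi.zero_apply,
      mem_supportedOn.1 hv j hjf]

theorem funLeft_comp_extendByZero (hf : f.Injective) : res f ∘ₗ extZ f = LinearMap.id := by
  ext v k
  simp [LinearMap.funLeft_apply, hf.extend_apply]

theorem funLeft_comp_extendByZero_of_disjoint {κ' : Type*} {g : κ' → ι}
    (hfg : Disjoint (Set.range f) (Set.range g)) : res g ∘ₗ extZ f = 0 := by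
  ext v k
  simp [LinearMap.funLeft_apply, Function.extend_apply' _ _ _
    fun ⟨j, hj⟩ => Set.disjoint_left.1 hfg ⟨j, hj⟩ ⟨k, rfl⟩]

variable [DecidableEq κ] [DecidableEq ι]

theorem funLeft_single (hf : f.Injective) (k : κ) :
    res f (Pi.single (f k) (1 : F)) = Pi.single k 1 := by
  funext j
  simp [LinearMap.funLeft_apply, Pi.single_apply, hf.eq_iff]

theorem extendByZero_single (hf : f.Injective) (k : κ) :
    extZ f (Pi.single k (1 : F)) = Pi.single (f k) 1 := by
  rw [← funLeft_single hf k, extendByZero_funLeft hf (single_mem_supportedOn ⟨k, rfl⟩)]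

variable {K : ι → Set ι} {A : Set ι} {W : Submodule F (ι → F)} {W' : Submodule F (κ → F)}

theorem single_mem_sup_of_map_extendByZero_le (hf : f.Injective)
    (hW' : IsDecodable (fun i => {j | f j ∈ K (f i)}) W') (hle : W'.map (extZ f) ≤ W) (i : κ) :
    Pi.single (f i) 1 ∈ W ⊔ supportedOn (K (f i)) := by
  have h := Submodule.mem_map_of_mem (f := extZ f) (hW' i)
  rw [Submodule.map_sup, extendByZero_single hf] at h
  refine sup_le_sup hle ?_ h
  rintro _ ⟨v, hv, rfl⟩
  exact extendByZero_mem_supportedOn hf hv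

theorem single_notMem_sup_of_map_funLeft_le (hf : f.Injective) (hW' : IsSecure (f ⁻¹' A) W')
    (hle : W.map (res f) ≤ W') {i : κ} (hi : f i ∉ A) :
    Pi.single (f i) 1 ∉ W ⊔ supportedOn A := by
  intro h
  have h' := Submodule.mem_map_of_mem (f := res f) h
  rw [Submodule.map_sup, funLeft_single hf] at h'
  refine hW' i hi (sup_le_sup hle ?_ h')
  rintro _ ⟨v, hv, rfl⟩
  exact funLeft_mem_supportedOn hv

theorem IsDecodable.comap_extendByZero (hf : f.Injective) (hW : IsDecodable K W)
    (hK : ∀ i, K (f i) ⊆ Set.range f) :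
    IsDecodable (fun i => {j | f j ∈ K (f i)}) (W.comap (extZ f)) := by
  intro i
  obtain ⟨w, hw, s, hs, hws⟩ := Submodule.mem_sup.1 (hW (f i))
  have hw_supp : w ∈ supportedOn (Set.range f) := by
    rw [eq_sub_of_add_eq hws]
    exact sub_mem (single_mem_supportedOn ⟨i, rfl⟩) (supportedOn_mono (hK i) hs)
  refine Submodule.mem_sup.2 ⟨res f w, ?_, res f s, funLeft_mem_supportedOn hs, ?_⟩
  · rwa [Submodule.mem_comap, extendByZero_funLeft hf hw_supp]
  · rw [← map_add, hws, funLeft_single hf]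

theorem IsSecure.comap_extendByZero (hf : f.Injective) (hW : IsSecure A W) :
    IsSecure (f ⁻¹' A) (W.comap (extZ f)) := by
  intro i hi h
  refine hW (f i) hi ?_
  have h' := Submodule.mem_map_of_mem (f := extZ f) h
  rw [Submodule.map_sup, extendByZero_single hf] at h'
  have hA : (supportedOn (f ⁻¹' A)).map (extZ f) ≤ supportedOn A := by
    rintro _ ⟨v, hv, rfl⟩
    exact extendByZero_mem_supportedOn hf hv
  exact sup_le_sup (Submodule.map_comap_le _ _) hA h'

end Transfer

section Sum

variable {ι₁ ι₂ : Type*}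

theorem preimage_inl_image_union (A₁ : Set ι₁) (A₂ : Set ι₂) :
    Sum.inl ⁻¹' (Sum.inl '' A₁ ∪ Sum.inr '' A₂) = A₁ := by
  ext; simp

theorem preimage_inr_image_union (A₁ : Set ι₁) (A₂ : Set ι₂) :
    Sum.inr ⁻¹' (Sum.inl '' A₁ ∪ Sum.inr '' A₂) = A₂ := by
  ext; simp

theorem rowSpace_fromBlocks {ρ₁ ρ₂ : Type*} (G₁ : Matrix ρ₁ ι₁ F) (G₂ : Matrix ρ₂ ι₂ F) :
    rowSpace F (fromBlocks G₁ 0 0 G₂) =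
      (rowSpace F G₁).map (extZ Sum.inl) ⊔ (rowSpace F G₂).map (extZ Sum.inr) := by
  have hrows : (fun r j => fromBlocks G₁ 0 0 G₂ r j) =
      Sum.elim (extZ Sum.inl ∘ fun r j => G₁ r j) (extZ Sum.inr ∘ fun r j => G₂ r j) := by
    funext r j
    rcases r with r | r <;> rcases j with j | j <;>
      simp [Sum.inl_injective.extend_apply, Sum.inr_injective.extend_apply, Function.extend_apply']
  simp only [rowSpace, hrows, Set.Sum.elim_range, Submodule.span_union, Set.range_comp,
    Submodule.map_span]

theorem finrank_comap_inl_add_finrank_comap_inr_le [Fintype ι₁] [Fintype ι₂]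
    (W : Submodule F (ι₁ ⊕ ι₂ → F)) :
    finrank F (W.comap (extZ Sum.inl)) + finrank F (W.comap (extZ Sum.inr)) ≤ finrank F W := by
  set V₁ := W.comap (extZ Sum.inl)
  set V₂ := W.comap (extZ Sum.inr)
  let Φ := (extZ Sum.inl ∘ₗ V₁.subtype).coprod (extZ Sum.inr ∘ₗ V₂.subtype)
  have hinl (v₁ : ι₁ → F) (v₂ : ι₂ → F) :
      res Sum.inl (extZ Sum.inl v₁ + extZ Sum.inr v₂) = v₁ := by
    funext k
    simp [LinearMap.funLeft_apply, Sum.inl_injective.extend_apply, Function.extend_apply']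
  have hinr (v₁ : ι₁ → F) (v₂ : ι₂ → F) :
      res Sum.inr (extZ Sum.inl v₁ + extZ Sum.inr v₂) = v₂ := by
    funext k
    simp [LinearMap.funLeft_apply, Sum.inr_injective.extend_apply, Function.extend_apply']
  have hΦ : Function.Injective Φ := fun x y hxy =>
    Prod.ext (Subtype.ext (by simpa [Φ, hinl] using congrArg (res Sum.inl) hxy))
      (Subtype.ext (by simpa [Φ, hinr] using congrArg (res Sum.inr) hxy))
  have hrange : LinearMap.range Φ ≤ W := by
    rw [LinearMap.range_coprod, LinearMap.range_comp, LinearMap.range_comp,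
      Submodule.range_subtype, Submodule.range_subtype]
    exact sup_le (Submodule.map_comap_le _ _) (Submodule.map_comap_le _ _)
  calc finrank F V₁ + finrank F V₂ = finrank F (V₁ × V₂) := finrank_prod.symm
    _ = finrank F (LinearMap.range Φ) := (LinearMap.finrank_range_of_inj hΦ).symm
    _ ≤ finrank F W := Submodule.finrank_mono hrange

variable [DecidableEq ι₁] [DecidableEq ι₂]

theorem IsDecodable.sup_map_extendByZero {K : ι₁ ⊕ ι₂ → Set (ι₁ ⊕ ι₂)}
    {W₁ : Submodule F (ι₁ → F)} {W₂ : Submodule F (ι₂ → F)}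
    (hW₁ : IsDecodable (fun i => {j | Sum.inl j ∈ K (Sum.inl i)}) W₁)
    (hW₂ : IsDecodable (fun i => {j | Sum.inr j ∈ K (Sum.inr i)}) W₂) :
    IsDecodable K (W₁.map (extZ Sum.inl) ⊔ W₂.map (extZ Sum.inr)) := by
  rintro (i | i)
  · exact single_mem_sup_of_map_extendByZero_le Sum.inl_injective hW₁ le_sup_left i
  · exact single_mem_sup_of_map_extendByZero_le Sum.inr_injective hW₂ le_sup_right i

theorem IsSecure.sup_map_extendByZero {A₁ : Set ι₁} {A₂ : Set ι₂}
    {W₁ : Submodule F (ι₁ → F)} {W₂ : Submodule F (ι₂ → F)}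
    (hW₁ : IsSecure A₁ W₁) (hW₂ : IsSecure A₂ W₂) :
    IsSecure (Sum.inl '' A₁ ∪ Sum.inr '' A₂) (W₁.map (extZ Sum.inl) ⊔ W₂.map (extZ Sum.inr)) := by
  have hdisj := Set.isCompl_range_inl_range_inr (α := ι₁) (β := ι₂)
  rintro (i | i) hi
  · refine single_notMem_sup_of_map_funLeft_le Sum.inl_injective (W' := W₁)
      (by rwa [preimage_inl_image_union]) ?_ hi
    rw [Submodule.map_sup, ← Submodule.map_comp, ← Submodule.map_comp,
      funLeft_comp_extendByZero Sum.inl_injective,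
      funLeft_comp_extendByZero_of_disjoint hdisj.disjoint.symm, Submodule.map_id,
      Submodule.map_zero, sup_bot_eq]
  · refine single_notMem_sup_of_map_funLeft_le Sum.inr_injective (W' := W₂)
      (by rwa [preimage_inr_image_union]) ?_ hi
    rw [Submodule.map_sup, ← Submodule.map_comp, ← Submodule.map_comp,
      funLeft_comp_extendByZero Sum.inr_injective,
      funLeft_comp_extendByZero_of_disjoint hdisj.disjoint, Submodule.map_id,
      Submodule.map_zero, bot_sup_eq]

end Sum

end

theorem opt_len_eq_add_of_noCross {m1 m2 : ℕ}
    (K : (Fin m1 ⊕ Fin m2) → Set (Fin m1 ⊕ Fin m2))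
    (hsep1 : ∀ i : Fin m1, K (Sum.inl i) ⊆ Set.range Sum.inl)
    (hsep2 : ∀ i : Fin m2, K (Sum.inr i) ⊆ Set.range Sum.inr)
    (A1 : Set (Fin m1)) (A2 : Set (Fin m2))
    (h1 : (oneLens F (fun i => {j | Sum.inl j ∈ K (Sum.inl i)}) A1).Nonempty)
    (h2 : (oneLens F (fun i => {j | Sum.inr j ∈ K (Sum.inr i)}) A2).Nonempty) :
    sInf (oneLens F K (Sum.inl '' A1 ∪ Sum.inr '' A2)) =
        sInf (oneLens F (fun i => {j | Sum.inl j ∈ K (Sum.inl i)}) A1) +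
          sInf (oneLens F (fun i => {j | Sum.inr j ∈ K (Sum.inr i)}) A2) ∧
      ∀ (G1 : Matrix
            (Fin (sInf (oneLens F (fun i => {j | Sum.inl j ∈ K (Sum.inl i)}) A1)))
            (Fin m1) F)
        (G2 : Matrix
            (Fin (sInf (oneLens F (fun i => {j | Sum.inr j ∈ K (Sum.inr i)}) A2)))
            (Fin m2) F),
        ValidCode F (fun i => {j | Sum.inl j ∈ K (Sum.inl i)}) G1 →
        WeaklySecure F G1 A1 →
        ValidCode F (fun i => {j | Sum.inr j ∈ K (Sum.inr i)}) G2 →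
        WeaklySecure F G2 A2 →
        ValidCode F K (Matrix.fromBlocks G1 0 0 G2) ∧
          WeaklySecure F (Matrix.fromBlocks G1 0 0 G2)
            (Sum.inl '' A1 ∪ Sum.inr '' A2) := by
  obtain ⟨C₁, hC₁, hC₁'⟩ := Nat.sInf_mem h1
  obtain ⟨C₂, hC₂, hC₂'⟩ := Nat.sInf_mem h2
  rw [validCode_iff_isDecodable] at hC₁ hC₂
  rw [weaklySecure_iff_isSecure] at hC₁' hC₂'
  have hblock :=
    finrank_mem_oneLens (hC₁.sup_map_extendByZero hC₂) (hC₁'.sup_map_extendByZero hC₂')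
  obtain ⟨G, hv, hs⟩ := Nat.sInf_mem ⟨_, hblock⟩
  rw [validCode_iff_isDecodable] at hv
  rw [weaklySecure_iff_isSecure] at hs
  have hG₁ := finrank_mem_oneLens (hv.comap_extendByZero Sum.inl_injective hsep1)
    (hs.comap_extendByZero Sum.inl_injective)
  have hG₂ := finrank_mem_oneLens (hv.comap_extendByZero Sum.inr_injective hsep2)
    (hs.comap_extendByZero Sum.inr_injective)
  rw [preimage_inl_image_union] at hG₁
  rw [preimage_inr_image_union] at hG₂
  refine ⟨le_antisymm ?_ ?_, fun G₁ G₂ hv₁ hs₁ hv₂ hs₂ => ?_⟩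
  · calc _ ≤ _ := Nat.sInf_le hblock
      _ = Module.finrank F (rowSpace F (fromBlocks C₁ 0 0 C₂)) := by rw [rowSpace_fromBlocks]
      _ ≤ _ := (finrank_rowSpace_le _).trans (by simp)
  · calc _ ≤ _ := add_le_add (Nat.sInf_le hG₁) (Nat.sInf_le hG₂)
      _ ≤ Module.finrank F (rowSpace F G) := finrank_comap_inl_add_finrank_comap_inr_le _
      _ ≤ _ := (finrank_rowSpace_le G).trans (by simp)
  · rw [validCode_iff_isDecodable] at hv₁ hv₂ ⊢
    rw [weaklySecure_iff_isSecure] at hs₁ hs₂ ⊢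
    rw [rowSpace_fromBlocks]
    exact ⟨hv₁.sup_map_extendByZero hv₂, hs₁.sup_map_extendByZero hs₂⟩
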